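/- arXiv:1303.0437 — 6 statements merged into one kernel-verified Lean document; each statement's English description precedes it below -/
import Mathlib

section
/- For each real p with 1 ≤ p ≤ n, the set 𝒫_p = {A ∈ Sym²(ℝⁿ) : λ₁(A) + ⋯ + λ_{⌊p⌋}(A) + (p - ⌊p⌋)·λ_{⌊p⌋+1}(A) ≥ 0} is a closed convex cone in Sym²(ℝⁿ). -/
open Matrix

/-- The eigenvalues of a real symmetric (Hermitian) matrix, in increasing order. -/
noncomputable def sortedEig {n : ℕ} {A : Matrix (Fin n) (Fin n) ℝ}
    (hA : A.IsHermitian) : Fin n → ℝ :=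
  hA.eigenvalues ∘ Tuple.sort hA.eigenvalues

/-- `λ₁(A) + ⋯ + λ_{⌊p⌋}(A) + (p - ⌊p⌋) λ_{⌊p⌋+1}(A)` for a real parameter `p`
(defined to be `0` on non-symmetric matrices). -/
noncomputable def lamSum (n : ℕ) (p : ℝ) (A : Matrix (Fin n) (Fin n) ℝ) : ℝ :=
  if hA : A.IsHermitian then
    (∑ i ∈ Finset.univ.filter (fun i : Fin n => (i : ℕ) < ⌊p⌋₊), sortedEig hA i)
      + (if h : ⌊p⌋₊ < n then (p - ⌊p⌋₊) * sortedEig hA ⟨⌊p⌋₊, h⟩ else 0)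
  else 0

/-- The subequation `𝒫_p` for real `p`: symmetric matrices with
`λ₁ + ⋯ + λ_{⌊p⌋} + (p - ⌊p⌋) λ_{⌊p⌋+1} ≥ 0`. -/
def Pp (n : ℕ) (p : ℝ) : Set (Matrix (Fin n) (Fin n) ℝ) :=
  {A | A.IsHermitian ∧ 0 ≤ lamSum n p A}

/-!
Ky Fan's variational principle: for symmetric `A` and `0 ≤ p ≤ n`,
`λ₁(A) + ⋯ + λ_⌊p⌋(A) + (p - ⌊p⌋) λ_{⌊p⌋+1}(A) = min {tr (A P) : 0 ≤ P ≤ 1, tr P = p}`.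
In an eigenbasis of `A` one has `tr (A P) = ∑ λᵢ tᵢ` with `tᵢ = Pᵢᵢ ∈ [0, 1]` and `∑ tᵢ = p`;
against increasing `λᵢ` this is minimised by the greedy weights `(1, …, 1, p - ⌊p⌋, 0, …, 0)`,
which the diagonal choice of `P` attains. So `𝒫_p` is the set of symmetric matrices cut out by
the closed half-spaces `tr (A P) ≥ 0`, a closed convex cone.
-/

open Finset

theorem sum_mul_le_sum_mul_of_sub_mul_sub_nonneg {ι : Type*} [Fintype ι] {μ c t : ι → ℝ} (m : ℝ)
    (hsum : ∑ i, t i = ∑ i, c i) (h : ∀ i, 0 ≤ (μ i - m) * (t i - c i)) :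
    ∑ i, μ i * c i ≤ ∑ i, μ i * t i := by
  have hexpand : ∑ i, (μ i - m) * (t i - c i)
      = ∑ i, μ i * t i - ∑ i, μ i * c i - m * (∑ i, t i - ∑ i, c i) := by
    simp only [mul_sub, sub_mul, sum_sub_distrib, mul_sum]; ring
  rw [hsum, sub_self, mul_zero, sub_zero] at hexpand
  linarith [sum_nonneg fun i (_ : i ∈ univ) => h i]

noncomputable def floorWeight (n : ℕ) (p : ℝ) (i : Fin n) : ℝ :=
  if (i : ℕ) < ⌊p⌋₊ then 1 else if (i : ℕ) = ⌊p⌋₊ then p - ⌊p⌋₊ else 0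

section floorWeight

variable {n : ℕ} {p : ℝ}

theorem floorWeight_nonneg (hp : 0 ≤ p) (i : Fin n) : 0 ≤ floorWeight n p i := by
  have := Nat.floor_le hp
  unfold floorWeight; split_ifs <;> linarith

theorem floorWeight_le_one (i : Fin n) : floorWeight n p i ≤ 1 := by
  have := Nat.lt_floor_add_one p
  unfold floorWeight; split_ifs <;> linarith

theorem sum_mul_floorWeight (μ : Fin n → ℝ) :
    ∑ i, μ i * floorWeight n p i = (∑ i ∈ univ.filter (fun i : Fin n => (i : ℕ) < ⌊p⌋₊), μ i)
      + (if h : ⌊p⌋₊ < n then (p - ⌊p⌋₊) * μ ⟨⌊p⌋₊, h⟩ else 0) := by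
  have hsplit : ∀ i : Fin n, μ i * floorWeight n p i
      = (if (i : ℕ) < ⌊p⌋₊ then μ i else 0) + (if (i : ℕ) = ⌊p⌋₊ then (p - ⌊p⌋₊) * μ i else 0) := by
    intro i
    unfold floorWeight
    rcases lt_trichotomy (i : ℕ) ⌊p⌋₊ with h | h | h
    · simp [h, h.ne]
    · simp [h]; ring
    · simp [h.not_gt, h.ne']
  rw [sum_congr rfl fun i _ => hsplit i, sum_add_distrib, sum_ite, sum_const_zero, add_zero]
  congr 1
  split_ifs with h
  · rw [Fintype.sum_eq_single ⟨⌊p⌋₊, h⟩ fun i hi => if_neg fun h' => hi (Fin.ext h')]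
    simp
  · exact sum_eq_zero fun i _ => if_neg fun h' : (i : ℕ) = ⌊p⌋₊ => h (h' ▸ i.2)

theorem sum_floorWeight (hp : 0 ≤ p) (hpn : p ≤ n) : ∑ i, floorWeight n p i = p := by
  have h := sum_mul_floorWeight (n := n) (p := p) 1
  simp only [Pi.one_apply, one_mul, sum_const, nsmul_eq_mul, mul_one, Fin.card_filter_val_lt] at h
  rw [h]
  split_ifs with hk
  · rw [min_eq_right hk.le]; ring
  · have : (n : ℝ) ≤ ⌊p⌋₊ := by exact_mod_cast not_lt.1 hk
    rw [min_eq_left (not_lt.1 hk), add_zero]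
    linarith [Nat.floor_le hp]

theorem sum_mul_floorWeight_le {μ t : Fin n → ℝ} (hμ : Monotone μ) (ht0 : 0 ≤ t) (ht1 : t ≤ 1)
    (hsum : ∑ i, t i = ∑ i, floorWeight n p i) :
    ∑ i, μ i * floorWeight n p i ≤ ∑ i, μ i * t i := by
  -- when `⌊p⌋ ≥ n` all weights are `1` and any upper bound of `μ` serves as pivot
  set m : ℝ := if h : ⌊p⌋₊ < n then μ ⟨⌊p⌋₊, h⟩ else ⨆ i, μ i with hm
  refine sum_mul_le_sum_mul_of_sub_mul_sub_nonneg m hsum fun i => ?_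
  rcases lt_trichotomy (i : ℕ) ⌊p⌋₊ with h | h | h
  · have hμm : μ i ≤ m := by
      rw [hm]; split_ifs with hk
      · exact hμ (Fin.le_def.2 h.le)
      · exact le_ciSup (Set.finite_range μ).bddAbove i
    have hw : floorWeight n p i = 1 := if_pos h
    exact mul_nonneg_of_nonpos_of_nonpos (sub_nonpos.2 hμm) (hw ▸ sub_nonpos.2 (ht1 i))
  · have hk : ⌊p⌋₊ < n := h ▸ i.2
    have hi : i = ⟨⌊p⌋₊, hk⟩ := Fin.ext h
    simp [hm, hk, ← hi]
  · have hk : ⌊p⌋₊ < n := h.trans i.2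
    have hmμ : m ≤ μ i := by
      rw [hm, dif_pos hk]; exact hμ (Fin.le_def.2 h.le)
    have hw : floorWeight n p i = 0 := by simp [floorWeight, h.not_gt, h.ne']
    exact mul_nonneg (sub_nonneg.2 hmμ) (by rw [hw, sub_zero]; exact ht0 i)

end floorWeight

def kyFanSet (ι : Type*) [Fintype ι] [DecidableEq ι] (s : ℝ) : Set (Matrix ι ι ℝ) :=
  {P | P.PosSemidef ∧ (1 - P).PosSemidef ∧ P.trace = s}

section kyFanSet

variable {ι : Type*} [Fintype ι] [DecidableEq ι] {s : ℝ}

theorem star_mul_mul_mem_kyFanSet {U P : Matrix ι ι ℝ} (hU : U ∈ unitaryGroup ι ℝ)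
    (hP : P ∈ kyFanSet ι s) : star U * P * U ∈ kyFanSet ι s := by
  obtain ⟨hP0, hP1, htr⟩ := hP
  have hsub : 1 - star U * P * U = star U * (1 - P) * U := by
    rw [Matrix.mul_sub, Matrix.sub_mul, Matrix.mul_one, mem_unitaryGroup_iff'.1 hU]
  refine ⟨hP0.conjTranspose_mul_mul_same U, hsub ▸ hP1.conjTranspose_mul_mul_same U, ?_⟩
  rw [trace_mul_cycle, mem_unitaryGroup_iff.1 hU, Matrix.one_mul, htr]

theorem diagonal_mem_kyFanSet {d : ι → ℝ} (h0 : 0 ≤ d) (h1 : d ≤ 1) :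
    diagonal d ∈ kyFanSet ι (∑ i, d i) := by
  refine ⟨PosSemidef.diagonal h0, ?_, trace_diagonal d⟩
  rw [← diagonal_one, diagonal_sub]
  exact PosSemidef.diagonal (sub_nonneg.2 h1)

theorem diag_mem_Icc_of_mem_kyFanSet {P : Matrix ι ι ℝ} (hP : P ∈ kyFanSet ι s) (i : ι) :
    P i i ∈ Set.Icc 0 1 := by
  have h := hP.2.1.diag_nonneg (i := i)
  rw [Matrix.sub_apply, one_apply_eq, sub_nonneg] at h
  exact ⟨hP.1.diag_nonneg, h⟩

end kyFanSet

theorem Matrix.IsHermitian.trace_mul_eq_sum_eigenvalues_mul {ι : Type*} [Fintype ι]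
    [DecidableEq ι] {A : Matrix ι ι ℝ} (hA : A.IsHermitian) (P : Matrix ι ι ℝ) :
    (A * P).trace = ∑ i, hA.eigenvalues i *
      (star (hA.eigenvectorUnitary : Matrix ι ι ℝ) * P * hA.eigenvectorUnitary) i i := by
  conv_lhs => rw [hA.spectral_theorem, Unitary.conjStarAlgAut_apply]
  rw [Matrix.mul_assoc, Matrix.mul_assoc, trace_mul_comm, Matrix.mul_assoc]
  simp [trace, diagonal_mul]

section KyFan

variable {n : ℕ} {p : ℝ} {A : Matrix (Fin n) (Fin n) ℝ}

theorem lamSum_eq_sum_sortedEig_mul_floorWeight (hA : A.IsHermitian) :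
    lamSum n p A = ∑ i, sortedEig hA i * floorWeight n p i := by
  rw [lamSum, dif_pos hA, sum_mul_floorWeight]

theorem lamSum_le_trace_mul (hA : A.IsHermitian) (hp : 0 ≤ p) (hpn : p ≤ n)
    {P : Matrix (Fin n) (Fin n) ℝ} (hP : P ∈ kyFanSet (Fin n) p) :
    lamSum n p A ≤ (A * P).trace := by
  rw [lamSum_eq_sum_sortedEig_mul_floorWeight hA, hA.trace_mul_eq_sum_eigenvalues_mul]
  set Q := star (hA.eigenvectorUnitary : Matrix (Fin n) (Fin n) ℝ) * P * hA.eigenvectorUnitary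
  have hQ : Q ∈ kyFanSet (Fin n) p := star_mul_mul_mem_kyFanSet hA.eigenvectorUnitary.2 hP
  set σ := Tuple.sort hA.eigenvalues
  rw [← Equiv.sum_comp σ fun i => hA.eigenvalues i * Q i i]
  have hsum : ∑ i, Q (σ i) (σ i) = ∑ i, floorWeight n p i := by
    rw [Equiv.sum_comp σ fun i => Q i i, sum_floorWeight hp hpn, ← hQ.2.2]
    rfl
  exact sum_mul_floorWeight_le (μ := sortedEig hA) (Tuple.monotone_sort _)
    (fun i => (diag_mem_Icc_of_mem_kyFanSet hQ _).1)
    (fun i => (diag_mem_Icc_of_mem_kyFanSet hQ _).2) hsum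

theorem exists_mem_kyFanSet_trace_mul_eq_lamSum (hA : A.IsHermitian) (hp : 0 ≤ p) (hpn : p ≤ n) :
    ∃ P ∈ kyFanSet (Fin n) p, (A * P).trace = lamSum n p A := by
  set U : Matrix (Fin n) (Fin n) ℝ := ↑hA.eigenvectorUnitary
  have hU : U ∈ unitaryGroup (Fin n) ℝ := hA.eigenvectorUnitary.2
  set σ := Tuple.sort hA.eigenvalues
  set d : Fin n → ℝ := floorWeight n p ∘ σ.symm
  have hd : diagonal d ∈ kyFanSet (Fin n) p := by
    have hsum : ∑ i, d i = p := (Equiv.sum_comp σ.symm _).trans (sum_floorWeight hp hpn)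
    exact hsum ▸ diagonal_mem_kyFanSet (fun i => floorWeight_nonneg hp _)
      (fun i => floorWeight_le_one _)
  have hP := star_mul_mul_mem_kyFanSet (Unitary.star_mem hU) hd
  rw [star_star] at hP
  refine ⟨_, hP, ?_⟩
  have hconj : star U * (U * diagonal d * star U) * U = diagonal d := by
    simp only [← Matrix.mul_assoc, mem_unitaryGroup_iff'.1 hU, Matrix.one_mul]
    rw [Matrix.mul_assoc, mem_unitaryGroup_iff'.1 hU, Matrix.mul_one]
  rw [hA.trace_mul_eq_sum_eigenvalues_mul, hconj, lamSum_eq_sum_sortedEig_mul_floorWeight hA,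
    ← Equiv.sum_comp σ]
  simp [d, sortedEig, σ]

theorem Pp_eq_biInter (hp : 0 ≤ p) (hpn : p ≤ n) :
    Pp n p = {A | A.IsHermitian} ∩ ⋂ P ∈ kyFanSet (Fin n) p, {A | 0 ≤ (A * P).trace} := by
  ext A
  simp only [Pp, Set.mem_inter_iff, Set.mem_ofPred_eq, Set.mem_iInter₂]
  refine and_congr_right fun hA => ⟨fun h P hP => h.trans (lamSum_le_trace_mul hA hp hpn hP), ?_⟩
  obtain ⟨P, hP, heq⟩ := exists_mem_kyFanSet_trace_mul_eq_lamSum hA hp hpn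
  exact fun h => heq ▸ h P hP

end KyFan

/-- For `1 ≤ p ≤ n`, `𝒫_p` is a closed convex cone in `Sym²(ℝⁿ)`. -/
theorem Pp_closed_convex_cone (n : ℕ) (p : ℝ) (hp1 : 1 ≤ p) (hpn : p ≤ n) :
    IsClosed (Pp n p) ∧
    (∀ A ∈ Pp n p, ∀ B ∈ Pp n p, A + B ∈ Pp n p) ∧
    (∀ c : ℝ, 0 ≤ c → ∀ A ∈ Pp n p, c • A ∈ Pp n p) := by
  simp only [Pp_eq_biInter (zero_le_one.trans hp1) hpn, Set.mem_inter_iff, Set.mem_ofPred_eq,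
    Set.mem_iInter₂]
  refine ⟨?_, ?_, ?_⟩
  · exact (isClosed_eq continuous_id.matrix_conjTranspose continuous_id).inter <|
      isClosed_biInter fun P _ =>
        isClosed_le continuous_const (continuous_id.matrix_mul continuous_const).matrix_trace
  · rintro A ⟨hA, hAP⟩ B ⟨hB, hBP⟩
    refine ⟨hA.add hB, fun P hP => ?_⟩
    rw [Matrix.add_mul, trace_add]
    exact add_nonneg (hAP P hP) (hBP P hP)
  · rintro c hc A ⟨hA, hAP⟩
    refine ⟨hA.smul (IsSelfAdjoint.all c), fun P hP => ?_⟩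
    rw [Matrix.smul_mul, trace_smul]
    exact smul_nonneg hc (hAP P hP)
end

section
/- For an integer p with 1 ≤ p ≤ n, a symmetric matrix A belongs to the dual cone 𝒫̃_p = -(complement of interior of (-𝒫_p)) if and only if λ_{n-p+1}(A) + ⋯ + λ_n(A) ≥ 0. -/
open Matrix

/-- `λ₁(A) + ⋯ + λ_p(A)` (the `p` smallest eigenvalues), `0` on non-symmetric matrices. -/
noncomputable def lowSum (n p : ℕ) (A : Matrix (Fin n) (Fin n) ℝ) : ℝ :=
  if hA : A.IsHermitian then
    ∑ i ∈ Finset.univ.filter (fun i : Fin n => (i : ℕ) < p), sortedEig hA i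
  else 0

/-- `λ_{n-p+1}(A) + ⋯ + λ_n(A)` (the `p` largest eigenvalues), `0` on non-symmetric ones. -/
noncomputable def topSum (n p : ℕ) (A : Matrix (Fin n) (Fin n) ℝ) : ℝ :=
  if hA : A.IsHermitian then
    ∑ i ∈ Finset.univ.filter (fun i : Fin n => n - p ≤ (i : ℕ)), sortedEig hA i
  else 0

/-- The space `Sym²(ℝⁿ)` of symmetric matrices, as the self-adjoint subtype. -/
abbrev SymSpace (n : ℕ) := selfAdjoint (Matrix (Fin n) (Fin n) ℝ)

/-- `𝒫_p` inside `Sym²(ℝⁿ)`. -/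
def PpSym (n p : ℕ) : Set (SymSpace n) := {A | 0 ≤ lowSum n p A.1}

/-!
By Ky Fan's principle, `λ₁(C) + ⋯ + λ_p(C)` is the minimum, and `λ_{n-p+1}(C) + ⋯ + λ_n(C)` the
maximum, of `tr (W C Wᵀ)` over `p × n` matrices `W` with orthonormal rows: in an eigenbasis of `C`
this trace is a weighted sum of the eigenvalues with weights in `[0, 1]` of total mass `p`.
Hence the top sum of `A` is minus the bottom sum of `-A`, and the bottom sum is concave (a minimum
of linear functions), so continuous, and drops by at least `p ε` under `C ↦ C - ε I`. Therefore
`int 𝒫_p = {λ₁ + ⋯ + λ_p > 0}`.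
-/

open Finset

theorem Finset.sum_le_sum_mul_of_le_of_le {ι : Type*} [Fintype ι] (s : Finset ι) {μ t : ι → ℝ}
    (c : ℝ) (hs : ∀ j ∈ s, μ j ≤ c) (hsc : ∀ j ∉ s, c ≤ μ j) (ht0 : ∀ j, 0 ≤ t j)
    (ht1 : ∀ j, t j ≤ 1) (ht : ∑ j, t j = #s) : ∑ j ∈ s, μ j ≤ ∑ j, μ j * t j := by
  classical
  have key : ∑ j, μ j * t j - ∑ j ∈ s, μ j
      = ∑ j, (μ j - c) * (t j - if j ∈ s then 1 else 0) := by
    simp only [mul_sub, sub_mul, sum_sub_distrib, mul_ite, mul_one, mul_zero,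
      sum_ite_mem, univ_inter, ← mul_sum, ht, sum_const, nsmul_eq_mul]
    ring
  have hterm : ∀ j, 0 ≤ (μ j - c) * (t j - if j ∈ s then 1 else 0) := fun j => by
    split_ifs with hj
    · exact mul_nonneg_of_nonpos_of_nonpos (by linarith [hs j hj]) (by linarith [ht1 j])
    · simpa using mul_nonneg (sub_nonneg.2 (hsc j hj)) (ht0 j)
  linarith [sum_nonneg fun j (_ : j ∈ univ) => hterm j]

namespace Matrix

lemma diag_conjTranspose_mul_self_nonneg {m n : Type*} [Fintype m] (W : Matrix m n ℝ)
    (j : n) : 0 ≤ (Wᴴ * W) j j :=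
  sum_nonneg fun i _ => by simpa using mul_self_nonneg (W i j)

variable {m n : Type*} [Fintype m] [Fintype n] [DecidableEq m] {W : Matrix m n ℝ}

lemma diag_conjTranspose_mul_self_le_one (hW : W * Wᴴ = 1) (j : n) : (Wᴴ * W) j j ≤ 1 := by
  set M := Wᴴ * W
  have hM : Mᴴ * M = M := by
    rw [Matrix.conjTranspose_mul, Matrix.conjTranspose_conjTranspose, Matrix.mul_assoc,
      ← Matrix.mul_assoc W, hW, Matrix.one_mul]
  have hsq : M j j ^ 2 ≤ M j j :=
    calc M j j ^ 2 ≤ ∑ k, M k j ^ 2 := single_le_sum (fun k _ => sq_nonneg (M k j)) (mem_univ j)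
      _ = (Mᴴ * M) j j := by simp [Matrix.mul_apply, sq]
      _ = M j j := by rw [hM]
  nlinarith [diag_conjTranspose_mul_self_nonneg W j]

lemma sum_diag_conjTranspose_mul_self (hW : W * Wᴴ = 1) :
    ∑ j, (Wᴴ * W) j j = Fintype.card m := by
  change (Wᴴ * W).trace = _
  rw [Matrix.trace_mul_comm, hW, Matrix.trace_one]

end Matrix

namespace Matrix.IsHermitian

variable {n : Type*} [Fintype n] [DecidableEq n] {C : Matrix n n ℝ} (hC : C.IsHermitian)

lemma eigenvectorUnitary_mul_conjTranspose :
    (hC.eigenvectorUnitary : Matrix n n ℝ) * (hC.eigenvectorUnitary : Matrix n n ℝ)ᴴ = 1 :=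
  Matrix.mem_unitaryGroup_iff.mp hC.eigenvectorUnitary.2

lemma conjTranspose_eigenvectorUnitary_mul :
    (hC.eigenvectorUnitary : Matrix n n ℝ)ᴴ * (hC.eigenvectorUnitary : Matrix n n ℝ) = 1 :=
  Matrix.mem_unitaryGroup_iff'.mp hC.eigenvectorUnitary.2

lemma conjTranspose_eigenvectorUnitary_mul_mul :
    (hC.eigenvectorUnitary : Matrix n n ℝ)ᴴ * C * hC.eigenvectorUnitary =
      diagonal hC.eigenvalues := by
  simpa [Unitary.conjStarAlgAut_star_apply, Matrix.star_eq_conjTranspose] using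
    hC.conjStarAlgAut_star_eigenvectorUnitary

lemma exists_trace_mul_mul_conjTranspose_eq_sum {m : Type*} [Fintype m] [DecidableEq m]
    {W : Matrix m n ℝ} (hW : W * Wᴴ = 1) :
    ∃ t : n → ℝ, (∀ j, 0 ≤ t j) ∧ (∀ j, t j ≤ 1) ∧ ∑ j, t j = Fintype.card m ∧
      (W * C * Wᴴ).trace = ∑ j, hC.eigenvalues j * t j := by
  set V : Matrix n n ℝ := (hC.eigenvectorUnitary : Matrix n n ℝ)
  set X := W * V
  have hX : X * Xᴴ = 1 := by
    rw [conjTranspose_mul, Matrix.mul_assoc, ← Matrix.mul_assoc V,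
      hC.eigenvectorUnitary_mul_conjTranspose, Matrix.one_mul, hW]
  have hC' : C = V * diagonal hC.eigenvalues * Vᴴ := by
    rw [← hC.conjTranspose_eigenvectorUnitary_mul_mul]
    simp only [← Matrix.mul_assoc]
    rw [Matrix.mul_assoc, hC.eigenvectorUnitary_mul_conjTranspose, Matrix.mul_one,
      Matrix.one_mul]
  have hWCW : W * C * Wᴴ = X * diagonal hC.eigenvalues * Xᴴ := by
    conv_lhs => rw [hC']
    simp only [X, conjTranspose_mul, Matrix.mul_assoc]
  refine ⟨fun j => (Xᴴ * X) j j, diag_conjTranspose_mul_self_nonneg X,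
    diag_conjTranspose_mul_self_le_one hX, sum_diag_conjTranspose_mul_self hX, ?_⟩
  rw [hWCW, Matrix.mul_assoc, trace_mul_comm, Matrix.mul_assoc, trace]
  simp [diagonal_mul]

lemma exists_trace_mul_mul_conjTranspose_eq_sum_comp {m : Type*} [Fintype m] [DecidableEq m]
    {f : m → n} (hf : f.Injective) :
    ∃ W : Matrix m n ℝ, W * Wᴴ = 1 ∧ (W * C * Wᴴ).trace = ∑ i, hC.eigenvalues (f i) := by
  set V : Matrix n n ℝ := (hC.eigenvectorUnitary : Matrix n n ℝ)
  refine ⟨Vᴴ.submatrix f id, ?_, ?_⟩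
  · rw [conjTranspose_submatrix, conjTranspose_conjTranspose, ← submatrix_mul _ _ _ _ _
      Function.bijective_id, hC.conjTranspose_eigenvectorUnitary_mul, submatrix_one _ hf]
  · have hsub : Vᴴ.submatrix f id * C * V.submatrix id f = (Vᴴ * C * V).submatrix f f := by
      rw [submatrix_mul _ _ f id f Function.bijective_id,
        submatrix_mul _ _ f id id Function.bijective_id]
      rfl
    rw [conjTranspose_submatrix, conjTranspose_conjTranspose, hsub,
      hC.conjTranspose_eigenvectorUnitary_mul_mul, submatrix_diagonal _ _ hf, trace_diagonal]
    rfl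

end Matrix.IsHermitian

namespace Fin

variable {n p : ℕ} {M : Type*} [AddCommMonoid M]

lemma sum_filter_val_lt (hpn : p ≤ n) (f : Fin n → M) :
    ∑ j ∈ univ.filter (fun j : Fin n => (j : ℕ) < p), f j = ∑ i : Fin p, f (i.castLE hpn) := by
  symm
  refine sum_bij (fun i _ => i.castLE hpn) (fun i _ => by simp)
    (fun _ _ _ _ h => castLE_injective hpn h) (fun j hj => ?_) (fun _ _ => rfl)
  exact ⟨⟨j, by simpa using hj⟩, mem_univ _, rfl⟩

lemma sum_filter_sub_le_val (hpn : p ≤ n) (f : Fin n → M) :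
    ∑ j ∈ univ.filter (fun j : Fin n => n - p ≤ (j : ℕ)), f j =
      ∑ i : Fin p, f ⟨n - p + i, by omega⟩ := by
  symm
  refine sum_bij (fun i _ => ⟨n - p + i, by omega⟩) (fun i _ => by simp; omega)
    (fun _ _ _ _ h => by simpa [Fin.ext_iff] using h) (fun j hj => ?_) (fun _ _ => rfl)
  simp only [mem_filter, mem_univ, true_and] at hj
  exact ⟨⟨j - (n - p), by omega⟩, mem_univ _, by ext; simp only; omega⟩

lemma card_filter_sub_le_val (hpn : p ≤ n) :
    #(univ.filter (fun j : Fin n => n - p ≤ (j : ℕ))) = p := by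
  rw [card_eq_sum_ones, sum_filter_sub_le_val hpn]
  simp

end Fin

section KyFan

variable {n p : ℕ} {C : Matrix (Fin n) (Fin n) ℝ} {W : Matrix (Fin p) (Fin n) ℝ}

theorem lowSum_le_trace (hp1 : 1 ≤ p) (hpn : p ≤ n) (hC : C.IsHermitian) (hW : W * Wᴴ = 1) :
    lowSum n p C ≤ (W * C * Wᴴ).trace := by
  obtain ⟨t, ht0, ht1, ht, htr⟩ := hC.exists_trace_mul_mul_conjTranspose_eq_sum hW
  set σ := Tuple.sort hC.eigenvalues
  rw [htr, lowSum, dif_pos hC, ← Equiv.sum_comp σ]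
  refine sum_le_sum_mul_of_le_of_le _ (sortedEig hC ⟨p - 1, by omega⟩)
    (fun j hj => Tuple.monotone_sort _ ?_) (fun j hj => Tuple.monotone_sort _ ?_)
    (fun j => ht0 _) (fun j => ht1 _) ?_
  · simp only [mem_filter, mem_univ, true_and] at hj
    show (j : ℕ) ≤ p - 1; omega
  · simp only [mem_filter, mem_univ, true_and, not_lt] at hj
    show p - 1 ≤ (j : ℕ); omega
  · rw [Equiv.sum_comp σ t, ht, Fin.card_filter_val_lt]; simp [hpn]

theorem trace_le_topSum (hp1 : 1 ≤ p) (hpn : p ≤ n) (hC : C.IsHermitian) (hW : W * Wᴴ = 1) :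
    (W * C * Wᴴ).trace ≤ topSum n p C := by
  obtain ⟨t, ht0, ht1, ht, htr⟩ := hC.exists_trace_mul_mul_conjTranspose_eq_sum hW
  set σ := Tuple.sort hC.eigenvalues
  rw [htr, topSum, dif_pos hC, ← Equiv.sum_comp σ]
  have := sum_le_sum_mul_of_le_of_le (univ.filter fun j : Fin n => n - p ≤ (j : ℕ))
    (μ := fun j => -sortedEig hC j) (t := t ∘ σ) (-sortedEig hC ⟨n - p, by omega⟩)
    (fun j hj => neg_le_neg (Tuple.monotone_sort _ ?_))
    (fun j hj => neg_le_neg (Tuple.monotone_sort _ ?_)) (fun j => ht0 _) (fun j => ht1 _) ?_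
  · simp only [Function.comp_apply, neg_mul, sum_neg_distrib, neg_le_neg_iff] at this
    exact this
  · simp only [mem_filter, mem_univ, true_and] at hj
    show n - p ≤ (j : ℕ); omega
  · simp only [mem_filter, mem_univ, true_and, not_le] at hj
    show (j : ℕ) ≤ n - p; omega
  · rw [Function.comp_def, Equiv.sum_comp σ t, ht, Fin.card_filter_sub_le_val hpn]; simp

theorem exists_trace_eq_lowSum (hpn : p ≤ n) (hC : C.IsHermitian) :
    ∃ W : Matrix (Fin p) (Fin n) ℝ, W * Wᴴ = 1 ∧ (W * C * Wᴴ).trace = lowSum n p C := by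
  obtain ⟨W, hW, htr⟩ := hC.exists_trace_mul_mul_conjTranspose_eq_sum_comp
    ((Tuple.sort hC.eigenvalues).injective.comp (Fin.castLE_injective hpn))
  exact ⟨W, hW, by rw [htr, lowSum, dif_pos hC, Fin.sum_filter_val_lt hpn]; rfl⟩

theorem exists_trace_eq_topSum (hpn : p ≤ n) (hC : C.IsHermitian) :
    ∃ W : Matrix (Fin p) (Fin n) ℝ, W * Wᴴ = 1 ∧ (W * C * Wᴴ).trace = topSum n p C := by
  obtain ⟨W, hW, htr⟩ := hC.exists_trace_mul_mul_conjTranspose_eq_sum_comp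
    (f := fun i : Fin p => Tuple.sort hC.eigenvalues ⟨n - p + i, by omega⟩)
    ((Tuple.sort hC.eigenvalues).injective.comp fun _ _ h => by simpa [Fin.ext_iff] using h)
  exact ⟨W, hW, by rw [htr, topSum, dif_pos hC, Fin.sum_filter_sub_le_val hpn]; rfl⟩

end KyFan

section Consequences

variable {n p : ℕ}

theorem topSum_eq_neg_lowSum_neg (hp1 : 1 ≤ p) (hpn : p ≤ n) {A : Matrix (Fin n) (Fin n) ℝ}
    (hA : A.IsHermitian) : topSum n p A = -lowSum n p (-A) := by
  obtain ⟨W, hW, hWA⟩ := exists_trace_eq_topSum hpn hA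
  obtain ⟨V, hV, hVA⟩ := exists_trace_eq_lowSum hpn hA.neg
  have h₁ := lowSum_le_trace hp1 hpn hA.neg hW
  have h₂ := trace_le_topSum hp1 hpn hA hV
  simp only [Matrix.mul_neg, Matrix.neg_mul, trace_neg] at h₁ hVA
  linarith

theorem lowSum_sub_smul_one_le (hp1 : 1 ≤ p) (hpn : p ≤ n) {C : Matrix (Fin n) (Fin n) ℝ}
    (hC : C.IsHermitian) (ε : ℝ) : lowSum n p (C - ε • 1) ≤ lowSum n p C - ε * p := by
  obtain ⟨W, hW, hWC⟩ := exists_trace_eq_lowSum hpn hC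
  calc lowSum n p (C - ε • 1) ≤ (W * (C - ε • 1) * Wᴴ).trace :=
        lowSum_le_trace hp1 hpn (hC.sub (isHermitian_one.smul (IsSelfAdjoint.all ε))) hW
    _ = lowSum n p C - ε * p := by
        rw [Matrix.mul_sub, Matrix.sub_mul, Matrix.mul_smul, Matrix.mul_one, Matrix.smul_mul,
          trace_sub, trace_smul, hW, hWC, trace_one, Fintype.card_fin, smul_eq_mul]

theorem concaveOn_lowSum (hp1 : 1 ≤ p) (hpn : p ≤ n) :
    ConcaveOn ℝ Set.univ fun B : SymSpace n => lowSum n p B.1 := by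
  refine ⟨convex_univ, fun B _ C _ a b ha hb _ => ?_⟩
  obtain ⟨W, hW, hWBC⟩ := exists_trace_eq_lowSum hpn (a • B + b • C).2
  calc a • lowSum n p B.1 + b • lowSum n p C.1
      ≤ a * (W * B.1 * Wᴴ).trace + b * (W * C.1 * Wᴴ).trace := by
        simp only [smul_eq_mul]
        gcongr
        exacts [lowSum_le_trace hp1 hpn B.2 hW, lowSum_le_trace hp1 hpn C.2 hW]
    _ = (W * (a • B.1 + b • C.1) * Wᴴ).trace := by
        simp only [Matrix.mul_add, Matrix.add_mul, Matrix.mul_smul, Matrix.smul_mul, trace_add,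
          trace_smul, smul_eq_mul]
    _ = lowSum n p (a • B + b • C).1 := hWBC

theorem continuous_lowSum (hp1 : 1 ≤ p) (hpn : p ≤ n) :
    Continuous fun B : SymSpace n => lowSum n p B.1 := by
  -- The sup norm is auxiliary: concave functions on finite-dimensional normed spaces are
  -- continuous, and `selfAdjointPart` extends `lowSum` to the open set of all matrices.
  let _ : NormedAddCommGroup (Matrix (Fin n) (Fin n) ℝ) := Matrix.normedAddCommGroup
  let _ : NormedSpace ℝ (Matrix (Fin n) (Fin n) ℝ) := Matrix.normedSpace
  have hsym : Continuous ((fun B : SymSpace n => lowSum n p B.1) ∘ selfAdjointPart ℝ) :=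
    continuousOn_univ.mp (((concaveOn_lowSum hp1 hpn).comp_linearMap _).continuousOn isOpen_univ)
  convert hsym.comp continuous_subtype_val with B
  rw [Function.comp_apply, Function.comp_apply, IsSelfAdjoint.selfAdjointPart_apply ℝ B.2]

theorem interior_PpSym (hp1 : 1 ≤ p) (hpn : p ≤ n) :
    interior (PpSym n p) = {B | 0 < lowSum n p B.1} := by
  refine subset_antisymm (fun B hB => ?_) (interior_maximal
    (fun B hB => show 0 ≤ lowSum n p B.1 from le_of_lt hB)
    (isOpen_lt continuous_const (continuous_lowSum hp1 hpn)))
  let path (ε : ℝ) : SymSpace n :=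
    ⟨B.1 - ε • 1, B.2.sub ((IsSelfAdjoint.all ε).smul (IsSelfAdjoint.one _))⟩
  have hpath : Filter.Tendsto path (nhdsWithin 0 (Set.Ioi 0)) (nhds B) :=
    (((continuous_const.sub (continuous_id.smul continuous_const)).subtype_mk _).tendsto'
      0 B (by simp)).mono_left nhdsWithin_le_nhds
  obtain ⟨ε, hε, hεpos⟩ := ((hpath.eventually_mem (mem_interior_iff_mem_nhds.mp hB)).and
    self_mem_nhdsWithin).exists
  have hεp : 0 < ε * p := mul_pos hεpos (by exact_mod_cast hp1)
  show 0 < lowSum n p B.1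
  linarith [lowSum_sub_smul_one_le hp1 hpn B.2 ε, show 0 ≤ lowSum n p (B.1 - ε • 1) from hε]

end Consequences

/-- For integer `1 ≤ p ≤ n`, a symmetric matrix `A` belongs to the dual cone
`𝒫̃_p = {A : -A ∉ int 𝒫_p}` (interior taken in `Sym²(ℝⁿ)`) if and only if
`λ_{n-p+1}(A) + ⋯ + λ_n(A) ≥ 0`. -/
theorem mem_dual_Pp_iff (n p : ℕ) (hp1 : 1 ≤ p) (hpn : p ≤ n) (A : SymSpace n) :
    -A ∉ interior (PpSym n p) ↔ 0 ≤ topSum n p A.1 := by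
  rw [interior_PpSym hp1 hpn, topSum_eq_neg_lowSum_neg hp1 hpn A.2, neg_nonneg]
  exact not_lt (α := ℝ)
end

section
/- Let F, M ⊆ Sym²(ℝⁿ) with F closed. Then F + M ⊆ F if and only if F̃ + M ⊆ F̃, where F̃ = {A : -A ∉ int F} is the dual of F. -/
/-!
Translation by an element of `M` is an open map, so `F + M ⊆ F` passes to `int F + M ⊆ int F`,
and the identity `-A = -(A + B) + B` turns this into `F̃ + M ⊆ F̃`. Conversely the dual of the
dual is `cl (int F)`, which is `F` for a regular closed set, so the same argument applied to `F̃`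
gives back the statement for `F`.
-/

open Matrix

/-- The dual of a subset `F ⊆ Sym²(ℝⁿ)`: `F̃ = {A : -A ∉ int F}`. -/
def dualSet {n : ℕ} (F : Set (SymSpace n)) : Set (SymSpace n) :=
  {A | -A ∉ interior F}

open scoped Pointwise

section TopologicalAddGroup

variable {G : Type*} [TopologicalSpace G] [AddGroup G] [IsTopologicalAddGroup G]

theorem add_mem_interior_of_add_mem {S M : Set G} (h : ∀ A ∈ S, ∀ B ∈ M, A + B ∈ S)
    {A B : G} (hA : A ∈ interior S) (hB : B ∈ M) : A + B ∈ interior S := by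
  have hsub : (· + B) '' interior S ⊆ interior S :=
    interior_maximal (Set.image_subset_iff.2 fun x hx => h x (interior_subset hx) B hB)
      (isOpenMap_add_right B _ isOpen_interior)
  exact hsub ⟨A, hA, rfl⟩

theorem compl_neg_interior_compl_neg_interior (S : Set G) :
    (-interior (-interior S)ᶜ)ᶜ = closure (interior S) := by
  rw [interior_compl, ← Set.compl_neg, compl_compl, neg_closure, neg_neg]

end TopologicalAddGroup

theorem add_mem_compl_neg_interior_of_add_mem {G : Type*} [TopologicalSpace G] [AddCommGroup G]
    [IsTopologicalAddGroup G] {S M : Set G} (h : ∀ A ∈ S, ∀ B ∈ M, A + B ∈ S) :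
    ∀ A ∈ (-interior S)ᶜ, ∀ B ∈ M, A + B ∈ (-interior S)ᶜ := by
  intro A hA B hB hAB
  apply hA
  rw [Set.mem_neg, show -A = -(A + B) + B by abel]
  exact add_mem_interior_of_add_mem h hAB hB

theorem dualSet_eq {n : ℕ} (F : Set (SymSpace n)) : dualSet F = (-interior F)ᶜ := rfl

theorem dualSet_dualSet {n : ℕ} (F : Set (SymSpace n)) :
    dualSet (dualSet F) = closure (interior F) := by
  rw [dualSet_eq, dualSet_eq, compl_neg_interior_compl_neg_interior]

theorem monotonicity_duality_general (n : ℕ) (F M : Set (SymSpace n))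
    (hFreg : F = closure (interior F)) :
    (∀ A ∈ F, ∀ B ∈ M, A + B ∈ F) ↔ (∀ A ∈ dualSet F, ∀ B ∈ M, A + B ∈ dualSet F) := by
  refine ⟨add_mem_compl_neg_interior_of_add_mem, fun h => ?_⟩
  have hdual := add_mem_compl_neg_interior_of_add_mem h
  rwa [← dualSet_eq, dualSet_dualSet, ← hFreg] at hdual

/-- For `F ⊆ Sym²(ℝⁿ)` closed (and topologically regular: `F` is the closure
of its interior) and any `M ⊆ Sym²(ℝⁿ)`, one has `F + M ⊆ F` iff `F̃ + M ⊆ F̃`. -/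
theorem monotonicity_duality (n : ℕ) (F M : Set (SymSpace n))
    (hFclosed : IsClosed F) (hFreg : F = closure (interior F)) :
    (∀ A ∈ F, ∀ B ∈ M, A + B ∈ F) ↔ (∀ A ∈ dualSet F, ∀ B ∈ M, A + B ∈ dualSet F) :=
  monotonicity_duality_general n F M hFreg
end

section
/- The Riesz characteristic of the cone P(δ) = {A ∈ Sym²(ℝⁿ) : A + δ(tr A)I ≥ 0}, defined as sup{p : I - p·P_e ∈ P(δ) for all unit vectors e}, equals (1 + δn)/(1 + δ). -/
/-!
Since `tr (I - p P_e) = n - p`, the matrix `I - p P_e + δ tr (I - p P_e) I` equals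
`(1 + δ (n - p)) I - p P_e`, whose eigenvalues are `1 + δ (n - p)` on `e⊥` and
`1 + δ (n - p) - p` on `e`. For `δ > 0` the second one is the binding constraint, so the set of
admissible `p` is the half-line `p (1 + δ) ≤ 1 + δ n`, whatever the unit vector `e`.
-/

open Matrix

/-- The `δ`-uniformly elliptic cone `P(δ) = {A : A + δ (tr A) I ≥ 0}`. -/
def Pdelta (n : ℕ) (δ : ℝ) : Set (Matrix (Fin n) (Fin n) ℝ) :=
  {A | (A + δ • (A.trace • (1 : Matrix (Fin n) (Fin n) ℝ))).PosSemidef}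

namespace Matrix

variable {ι : Type*} [DecidableEq ι]

lemma isHermitian_smul_one_sub_smul_vecMulVec (a p : ℝ) (e : ι → ℝ) :
    (a • (1 : Matrix ι ι ℝ) - p • vecMulVec e e).IsHermitian := by
  ext i j
  simp [one_apply, vecMulVec_apply, eq_comm, mul_comm]

variable [Fintype ι]

lemma dotProduct_smul_one_sub_smul_vecMulVec_mulVec (a p : ℝ) (e x : ι → ℝ) :
    x ⬝ᵥ ((a • (1 : Matrix ι ι ℝ) - p • vecMulVec e e) *ᵥ x)
      = a * (x ⬝ᵥ x) - p * (e ⬝ᵥ x) ^ 2 := by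
  simp only [sub_mulVec, smul_mulVec, one_mulVec, vecMulVec_mulVec, dotProduct_sub,
    dotProduct_smul, op_smul_eq_smul, smul_eq_mul, dotProduct_comm x e]
  ring

lemma le_of_posSemidef_smul_one_sub_smul_vecMulVec {a p : ℝ} {e : ι → ℝ} (he : e ⬝ᵥ e = 1)
    (h : (a • (1 : Matrix ι ι ℝ) - p • vecMulVec e e).PosSemidef) : p ≤ a := by
  have := h.dotProduct_mulVec_nonneg e
  rw [star_trivial, dotProduct_smul_one_sub_smul_vecMulVec_mulVec, he] at this
  linarith

lemma posSemidef_smul_one_sub_smul_vecMulVec {a p : ℝ} {e : ι → ℝ} (he : e ⬝ᵥ e = 1)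
    (ha : 0 ≤ a) (hpa : p ≤ a) : (a • (1 : Matrix ι ι ℝ) - p • vecMulVec e e).PosSemidef := by
  refine .of_dotProduct_mulVec_nonneg (isHermitian_smul_one_sub_smul_vecMulVec a p e) fun x => ?_
  rw [star_trivial, dotProduct_smul_one_sub_smul_vecMulVec_mulVec]
  have hx : 0 ≤ x ⬝ᵥ x := dotProduct_self_star_nonneg x
  have cauchy_schwarz : (e ⬝ᵥ x) ^ 2 ≤ x ⬝ᵥ x := by
    have := Finset.sum_mul_sq_le_sq_mul_sq Finset.univ e x
    simp only [sq] at this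
    change (e ⬝ᵥ x) * (e ⬝ᵥ x) ≤ (e ⬝ᵥ e) * (x ⬝ᵥ x) at this
    rwa [he, one_mul, ← sq] at this
  rcases le_or_gt p 0 with hp | hp
  · nlinarith [sq_nonneg (e ⬝ᵥ x)]
  · nlinarith

end Matrix

lemma one_sub_smul_vecMulVec_mem_Pdelta_iff {n : ℕ} {δ p : ℝ} (hδ : 0 ≤ δ) {e : Fin n → ℝ}
    (he : e ⬝ᵥ e = 1) :
    (1 - p • vecMulVec e e) ∈ Pdelta n δ ↔ p * (1 + δ) ≤ 1 + δ * n := by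
  have hshift : (1 - p • vecMulVec e e) + δ • ((1 - p • vecMulVec e e).trace • 1)
      = (1 + δ * (n - p)) • (1 : Matrix (Fin n) (Fin n) ℝ) - p • vecMulVec e e := by
    simp only [trace_sub, trace_one, trace_smul, trace_vecMulVec, he, Fintype.card_fin,
      smul_eq_mul, mul_one, smul_smul, add_smul, one_smul]
    abel
  rw [Pdelta, Set.mem_ofPred_eq, hshift]
  constructor
  · intro h
    linarith [le_of_posSemidef_smul_one_sub_smul_vecMulVec he h]
  · intro h
    refine posSemidef_smul_one_sub_smul_vecMulVec he ?_ (by linarith)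
    rcases le_or_gt p 0 with hp | hp <;> nlinarith [(Nat.cast_nonneg n : (0 : ℝ) ≤ n)]

/-- The Riesz characteristic of `P(δ)`,
`sup {p : I - p P_e ∈ P(δ) for all unit e}`, equals `(1 + δn)/(1 + δ)`. -/
theorem riesz_characteristic_Pdelta (n : ℕ) (hn : 1 ≤ n) (δ : ℝ) (hδ : 0 < δ) :
    sSup {p : ℝ | ∀ e : Fin n → ℝ, (∑ i, e i ^ 2 = 1) →
        ((1 : Matrix (Fin n) (Fin n) ℝ) - p • vecMulVec e e) ∈ Pdelta n δ}
      = (1 + δ * n) / (1 + δ) := by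
  have hunit (e : Fin n → ℝ) : ∑ i, e i ^ 2 = 1 ↔ e ⬝ᵥ e = 1 := by
    simp only [dotProduct, sq]
  have hchar : {p : ℝ | ∀ e : Fin n → ℝ, (∑ i, e i ^ 2 = 1) →
        ((1 : Matrix (Fin n) (Fin n) ℝ) - p • vecMulVec e e) ∈ Pdelta n δ}
      = Set.Iic ((1 + δ * n) / (1 + δ)) := by
    ext p
    simp only [Set.mem_ofPred_eq, Set.mem_Iic, le_div_iff₀ (by linarith : (0 : ℝ) < 1 + δ), hunit]
    refine ⟨fun h => ?_, fun h e he => (one_sub_smul_vecMulVec_mem_Pdelta_iff hδ.le he).2 h⟩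
    have he₀ : Pi.single (⟨0, hn⟩ : Fin n) 1 ⬝ᵥ Pi.single ⟨0, hn⟩ (1 : ℝ) = 1 := by simp
    exact (one_sub_smul_vecMulVec_mem_Pdelta_iff hδ.le he₀).1 (h _ he₀)
  rw [hchar, csSup_Iic]
end

section
/- Define the Pucci cone 𝒫_{λ,Λ} = {A ∈ Sym²(ℝⁿ) : λ·tr(A⁺) + Λ·tr(A⁻) ≥ 0} for 0 < λ < Λ, where A = A⁺ + A⁻ with A⁺ ≥ 0 and A⁻ ≤ 0 the positive and negative parts. Then its Riesz characteristic sup{p : I - pP_e ∈ 𝒫_{λ,Λ} for all unit e} equals (λ/Λ)(n-1) + 1. -/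
open Matrix

/-- `λ tr(A⁺) + Λ tr(A⁻)`, computed spectrally as
`∑ᵢ (λ max(λᵢ(A),0) + Λ min(λᵢ(A),0))`; `0` on non-symmetric matrices. -/
noncomputable def pucciVal (n : ℕ) (l L : ℝ) (A : Matrix (Fin n) (Fin n) ℝ) : ℝ :=
  if hA : A.IsHermitian then
    ∑ i, (l * max (hA.eigenvalues i) 0 + L * min (hA.eigenvalues i) 0)
  else 0

/-- The Pucci cone `𝒫_{λ,Λ} = {A : λ tr(A⁺) + Λ tr(A⁻) ≥ 0}`. -/
def Pucci (n : ℕ) (l L : ℝ) : Set (Matrix (Fin n) (Fin n) ℝ) :=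
  {A | A.IsHermitian ∧ 0 ≤ pucciVal n l L A}

/-! For a unit vector `e`, the characteristic polynomial of `I - p eeᵀ` is
`(X - (1 - p)) (X - 1)^(n-1)`, so its eigenvalues are `1 - p` once and `1` with multiplicity
`n - 1`. Its Pucci value `λ (n - 1) + λ (1-p)⁺ - Λ (1-p)⁻` therefore does not depend on `e`,
and it is nonnegative exactly when `p ≤ (λ/Λ)(n - 1) + 1`: the admissible `p` form the half-line
below that number. -/

open Polynomial in
theorem Matrix.charpoly_one_sub_vecMulVec {ι R : Type*} [Fintype ι] [DecidableEq ι] [Nonempty ι]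
    [CommRing R] (u v : ι → R) :
    (1 - vecMulVec u v).charpoly = (X - C (1 - u ⬝ᵥ v)) * (X - 1) ^ (Fintype.card ι - 1) := by
  have hcard : Fintype.card ι = Fintype.card ι - 1 + 1 :=
    (Nat.succ_pred_eq_of_pos Fintype.card_pos).symm
  have h : 1 - vecMulVec u v = vecMulVec (-u) v - scalar ι (-1 : R) := by
    simp [sub_eq_add_neg, add_comm]
  rw [h, charpoly_sub_scalar, charpoly_vecMulVec, hcard]
  simp [pow_succ, neg_dotProduct, smul_eq_C_mul]
  ring

theorem Matrix.IsHermitian.sum_eigenvalues_comp {ι : Type*} [Fintype ι] [DecidableEq ι]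
    {A : Matrix ι ι ℝ} (hA : A.IsHermitian) (g : ℝ → ℝ) :
    ∑ i, g (hA.eigenvalues i) = (A.charpoly.roots.map g).sum := by
  rw [hA.roots_charpoly_eq_eigenvalues, Multiset.map_map]
  rfl

theorem Matrix.nonempty_of_dotProduct_eq_one {ι R : Type*} [Fintype ι] [NonAssocSemiring R]
    [Nontrivial R] {u v : ι → R} (h : u ⬝ᵥ v = 1) : Nonempty ι := by
  by_contra hι
  rw [not_nonempty_iff] at hι
  simp at h

open Polynomial in
theorem Matrix.roots_charpoly_one_sub_smul_vecMulVec {n : ℕ} {e : Fin n → ℝ} (he : e ⬝ᵥ e = 1)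
    (p : ℝ) : (1 - p • vecMulVec e e).charpoly.roots = (1 - p) ::ₘ .replicate (n - 1) 1 := by
  have := nonempty_of_dotProduct_eq_one he
  rw [← smul_vecMulVec, charpoly_one_sub_vecMulVec, smul_dotProduct, he, smul_eq_mul, mul_one,
    Fintype.card_fin, ← C_1, ← roots_multiset_prod_X_sub_C ((1 - p) ::ₘ .replicate (n - 1) 1)]
  simp [Multiset.map_replicate]

theorem Matrix.isHermitian_one_sub_smul_vecMulVec {ι : Type*} [Fintype ι] [DecidableEq ι]
    (e : ι → ℝ) (p : ℝ) : (1 - p • vecMulVec e e).IsHermitian :=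
  isHermitian_one.sub (by simp [IsHermitian, ← smul_vecMulVec])

def pucciWeight (l L t : ℝ) : ℝ := l * max t 0 + L * min t 0

theorem pucciVal_eq_sum_pucciWeight {n : ℕ} (l L : ℝ) {A : Matrix (Fin n) (Fin n) ℝ}
    (hA : A.IsHermitian) : pucciVal n l L A = ∑ i, pucciWeight l L (hA.eigenvalues i) := by
  rw [pucciVal, dif_pos hA]
  rfl

theorem pucciVal_one_sub_smul_vecMulVec {n : ℕ} {e : Fin n → ℝ} (he : e ⬝ᵥ e = 1) (l L p : ℝ) :
    pucciVal n l L (1 - p • vecMulVec e e) = pucciWeight l L (1 - p) + (n - 1) * l := by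
  have hn : 1 ≤ n := Fin.pos_iff_nonempty.mpr (nonempty_of_dotProduct_eq_one he)
  rw [pucciVal_eq_sum_pucciWeight l L (isHermitian_one_sub_smul_vecMulVec e p),
    IsHermitian.sum_eigenvalues_comp, roots_charpoly_one_sub_smul_vecMulVec he]
  simp [pucciWeight, Nat.cast_sub hn]

theorem pucciWeight_one_sub_add_nonneg_iff {l L m p : ℝ} (hl : 0 ≤ l) (hL : 0 < L) (hm : 0 ≤ m) :
    0 ≤ pucciWeight l L (1 - p) + m * l ↔ p ≤ l / L * m + 1 := by
  rw [pucciWeight]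
  rcases le_total p 1 with hp | hp
  · rw [max_eq_left (by linarith), min_eq_right (by linarith)]
    have : 0 ≤ l / L * m := by positivity
    constructor <;> intro <;> nlinarith
  · have hbound : p ≤ l / L * m + 1 ↔ (p - 1) * L ≤ l * m := by
      rw [← sub_le_iff_le_add, div_mul_eq_mul_div, le_div_iff₀ hL]
    rw [max_eq_right (by linarith), min_eq_left (by linarith), hbound]
    constructor <;> intro <;> linarith

theorem one_sub_smul_vecMulVec_mem_pucci_iff {n : ℕ} {e : Fin n → ℝ} (he : e ⬝ᵥ e = 1)
    (l L p : ℝ) :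
    1 - p • vecMulVec e e ∈ Pucci n l L ↔ 0 ≤ pucciWeight l L (1 - p) + (n - 1) * l := by
  simp only [Pucci, Set.mem_ofPred_eq, isHermitian_one_sub_smul_vecMulVec, true_and,
    pucciVal_one_sub_smul_vecMulVec he]

/-- The Riesz characteristic of the Pucci cone `𝒫_{λ,Λ}` (for `0 < λ < Λ`)
equals `(λ/Λ)(n-1) + 1`. -/
theorem riesz_characteristic_pucci (n : ℕ) (hn : 2 ≤ n) (l L : ℝ) (hl : 0 < l) (hlL : l < L) :
    sSup {p : ℝ | ∀ e : Fin n → ℝ, (∑ i, e i ^ 2 = 1) →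
        ((1 : Matrix (Fin n) (Fin n) ℝ) - p • vecMulVec e e) ∈ Pucci n l L}
      = (l / L) * (n - 1) + 1 := by
  have : NeZero n := ⟨by omega⟩
  have hm : (0 : ℝ) ≤ n - 1 := by
    rw [sub_nonneg, Nat.one_le_cast]
    omega
  have hunit : Pi.single 0 1 ⬝ᵥ (Pi.single 0 1 : Fin n → ℝ) = 1 := by simp
  have hS : {p : ℝ | ∀ e : Fin n → ℝ, (∑ i, e i ^ 2 = 1) →
      ((1 : Matrix (Fin n) (Fin n) ℝ) - p • vecMulVec e e) ∈ Pucci n l L} =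
      Set.Iic (l / L * (n - 1) + 1) := by
    ext p
    have hdot (e : Fin n → ℝ) : ∑ i, e i ^ 2 = e ⬝ᵥ e := by simp only [dotProduct, sq]
    simp only [Set.mem_ofPred_eq, Set.mem_Iic, hdot]
    rw [← pucciWeight_one_sub_add_nonneg_iff hl.le (hl.trans hlL) hm]
    exact ⟨fun h => (one_sub_smul_vecMulVec_mem_pucci_iff hunit l L p).mp (h _ hunit),
      fun h e he => (one_sub_smul_vecMulVec_mem_pucci_iff he l L p).mpr h⟩
  rw [hS, csSup_Iic]
end

section
/- Define F_k = {A ∈ Sym²(ℝⁿ) : σ₁(A) ≥ 0, ..., σ_k(A) ≥ 0}, where σ_j is the j-th elementary symmetric polynomial in the eigenvalues of A. Then the Riesz characteristic sup{p : I - pP_e ∈ F_k for all unit vectors e} equals n/k. -/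
/-!
For a unit vector `e`, the characteristic polynomial of `1 - p • e eᵀ` is
`(X - (1 - p)) (X - 1)ⁿ⁻¹`, so its eigenvalues are `1 - p` once and `1` with multiplicity `n - 1`.
Hence `σ_j(1 - p • e eᵀ) = C(n-1, j) + (1 - p) C(n-1, j-1) = C(n-1, j-1) (n/j - p)`, independently
of `e`. The matrix therefore lies in `F_k` iff `p ≤ n/j` for all `1 ≤ j ≤ k`, i.e. iff `p ≤ n/k`,
and the set of admissible `p` is the half-line `(-∞, n/k]`.
-/

open Matrix

/-- `σ_j(A)`, the `j`-th elementary symmetric function of the eigenvalues of the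
symmetric matrix `A` (`0` on non-symmetric matrices). -/
noncomputable def sigmaElem (n j : ℕ) (A : Matrix (Fin n) (Fin n) ℝ) : ℝ :=
  if hA : A.IsHermitian then
    ∑ t ∈ Finset.univ.powersetCard j, ∏ i ∈ t, hA.eigenvalues i
  else 0

/-- The `k`-th elementary symmetric cone `F_k = {A : σ₁(A) ≥ 0, …, σ_k(A) ≥ 0}`. -/
def Fk (n k : ℕ) : Set (Matrix (Fin n) (Fin n) ℝ) :=
  {A | A.IsHermitian ∧ ∀ j, 1 ≤ j → j ≤ k → 0 ≤ sigmaElem n j A}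

open Polynomial

namespace Multiset

variable {R : Type*} [CommSemiring R]

theorem esymm_cons_succ (a : R) (s : Multiset R) (j : ℕ) :
    (a ::ₘ s).esymm (j + 1) = s.esymm (j + 1) + a * s.esymm j := by
  simp only [esymm, powersetCard_cons, map_add, sum_add, map_map, Function.comp_def,
    prod_cons, sum_map_mul_left]

theorem esymm_replicate (m j : ℕ) (a : R) :
    (replicate m a).esymm j = m.choose j * a ^ j := by
  have hprod : ∀ t ∈ powersetCard j (replicate m a), t.prod = a ^ j := fun t ht => by
    obtain ⟨hle, hcard⟩ := mem_powersetCard.mp ht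
    rw [eq_replicate_of_mem fun x hx => eq_of_mem_replicate (mem_of_le hle hx), prod_replicate,
      hcard]
  rw [esymm, map_congr rfl hprod, map_const', sum_replicate, card_powersetCard, card_replicate,
    nsmul_eq_mul]

end Multiset

theorem choose_succ_add_one_sub_mul_choose (m j : ℕ) (p : ℝ) :
    (m.choose (j + 1) : ℝ) + (1 - p) * m.choose j = m.choose j * ((m + 1) / (j + 1) - p) := by
  have key : ((m + 1) * m.choose j : ℝ) = (m.choose j + m.choose (j + 1)) * (j + 1) := by
    exact_mod_cast (Nat.add_one_mul_choose_eq m j).trans (by rw [Nat.choose_succ_succ])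
  field_simp
  linarith

namespace Matrix

theorem nonempty_of_dotProduct_self_eq_one {ι R : Type*} [Fintype ι] [NonAssocSemiring R]
    [Nontrivial R] {e : ι → R} (he : e ⬝ᵥ e = 1) : Nonempty ι := by
  by_contra h
  rw [not_nonempty_iff] at h
  simp [dotProduct] at he

theorem charpoly_one_add_vecMulVec {ι R : Type*} [Fintype ι] [DecidableEq ι] [Nonempty ι]
    [CommRing R] (u v : ι → R) :
    (1 + vecMulVec u v).charpoly = (X - C (1 + u ⬝ᵥ v)) * (X - 1) ^ (Fintype.card ι - 1) := by
  have hcard : Fintype.card ι = Fintype.card ι - 1 + 1 := (Nat.sub_add_cancel Fintype.card_pos).symm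
  rw [show (1 : Matrix ι ι R) + vecMulVec u v = vecMulVec u v - scalar ι (-1) by
      rw [map_neg, map_one, sub_neg_eq_add, add_comm], charpoly_sub_scalar, charpoly_vecMulVec,
    hcard]
  simp only [Nat.add_sub_cancel, sub_comp, pow_comp, smul_comp, X_comp, map_neg, map_one, map_add]
  rw [smul_eq_C_mul]
  ring

variable {ι : Type*} [Fintype ι] [DecidableEq ι]

theorem isHermitian_one_sub_smul_vecMulVec_s12 (p : ℝ) (e : ι → ℝ) :
    ((1 : Matrix ι ι ℝ) - p • vecMulVec e e).IsHermitian :=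
  isHermitian_one.sub ((posSemidef_vecMulVec_self_star e).isHermitian.smul (IsSelfAdjoint.all p))

theorem eigenvalues_one_sub_smul_vecMulVec (p : ℝ) {e : ι → ℝ} (he : e ⬝ᵥ e = 1) :
    Finset.univ.val.map (isHermitian_one_sub_smul_vecMulVec_s12 p e).eigenvalues
      = (1 - p) ::ₘ Multiset.replicate (Fintype.card ι - 1) 1 := by
  have := nonempty_of_dotProduct_self_eq_one he
  have hchar : ((1 : Matrix ι ι ℝ) - p • vecMulVec e e).charpoly
      = (X - C (1 - p)) * (X - C 1) ^ (Fintype.card ι - 1) := by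
    rw [sub_eq_add_neg, ← smul_vecMulVec, ← neg_vecMulVec, charpoly_one_add_vecMulVec,
      neg_dotProduct, smul_dotProduct, he, map_one, smul_eq_mul, mul_one, ← sub_eq_add_neg]
  have h := (isHermitian_one_sub_smul_vecMulVec_s12 p e).roots_charpoly_eq_eigenvalues
  rw [hchar, roots_mul (mul_ne_zero (X_sub_C_ne_zero _) (pow_ne_zero _ (X_sub_C_ne_zero _))),
    roots_X_sub_C, roots_pow, roots_X_sub_C, Multiset.nsmul_singleton, Multiset.singleton_add,
    RCLike.ofReal_real_eq_id, Function.id_comp] at h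
  exact h.symm

end Matrix

theorem sigmaElem_one_sub_smul_vecMulVec {n j : ℕ} (hj : 1 ≤ j) (p : ℝ) {e : Fin n → ℝ}
    (he : ∑ i, e i ^ 2 = 1) :
    sigmaElem n j (1 - p • vecMulVec e e) = (n - 1).choose (j - 1) * (n / j - p) := by
  have hee : e ⬝ᵥ e = 1 := by simpa [dotProduct, sq] using he
  obtain ⟨m, rfl⟩ : ∃ m, n = m + 1 :=
    Nat.exists_eq_add_one.mpr (Fin.pos_iff_nonempty.mpr (nonempty_of_dotProduct_self_eq_one hee))
  obtain ⟨i, rfl⟩ := Nat.exists_eq_add_of_le' hj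
  rw [sigmaElem, dif_pos (isHermitian_one_sub_smul_vecMulVec_s12 p e), ← Finset.esymm_map_val,
    eigenvalues_one_sub_smul_vecMulVec p hee, Fintype.card_fin, Multiset.esymm_cons_succ,
    Multiset.esymm_replicate, Multiset.esymm_replicate]
  push_cast
  simpa using choose_succ_add_one_sub_mul_choose m i p

/-- The Riesz characteristic of `F_k` equals `n/k`. -/
theorem riesz_characteristic_Fk (n k : ℕ) (hk1 : 1 ≤ k) (hkn : k ≤ n) :
    sSup {p : ℝ | ∀ e : Fin n → ℝ, (∑ i, e i ^ 2 = 1) →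
        ((1 : Matrix (Fin n) (Fin n) ℝ) - p • vecMulVec e e) ∈ Fk n k}
      = (n : ℝ) / k := by
  suffices hS : {p : ℝ | ∀ e : Fin n → ℝ, (∑ i, e i ^ 2 = 1) →
      ((1 : Matrix (Fin n) (Fin n) ℝ) - p • vecMulVec e e) ∈ Fk n k} = Set.Iic ((n : ℝ) / k) by
    rw [hS, csSup_Iic]
  ext p
  constructor
  · intro h
    have hunit : ∑ i, (Pi.single ⟨0, by omega⟩ 1 : Fin n → ℝ) i ^ 2 = 1 := by
      simp [Pi.single_apply]
    have hσ := (h _ hunit).2 k hk1 le_rfl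
    rw [sigmaElem_one_sub_smul_vecMulVec hk1 p hunit] at hσ
    have hchoose : (0 : ℝ) < (n - 1).choose (k - 1) := by
      exact_mod_cast Nat.choose_pos (by omega)
    exact sub_nonneg.mp (nonneg_of_mul_nonneg_right hσ hchoose)
  · intro hp e he
    refine ⟨isHermitian_one_sub_smul_vecMulVec_s12 p e, fun j hj1 hjk => ?_⟩
    rw [sigmaElem_one_sub_smul_vecMulVec hj1 p he]
    have hnk_le_nj : (n : ℝ) / k ≤ n / j :=
      div_le_div_of_nonneg_left n.cast_nonneg (by exact_mod_cast hj1) (by exact_mod_cast hjk)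
    exact mul_nonneg (Nat.cast_nonneg _) (sub_nonneg.mpr (hp.trans hnk_le_nj))
end
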